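/- arXiv:1102.3321 — 4 statements merged into one kernel-verified Lean document; each statement's English description precedes it below -/
import Mathlib

section
/- Let p be a prime and let a, b, c be nonnegative integers with a < p−1, b < p−1, c < p−1. If α^a + α^b = 1 + α^c holds in 𝔽_p for every α ∈ 𝔽_p^×, then either (a = 0 and b = c) or (b = 0 and a = c). -/
/-!
The polynomial `X^a + X^b - 1 - X^c` has degree below `p - 1` and vanishes at all `p - 1` units
of `𝔽_p`, so it is zero. Two sums of two monomials agree only if their exponents agree as
multisets, except in characteristic `2`, where `X^a + X^a = 0 = 1 + 1`.
-/

open Polynomial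

theorem Polynomial.X_pow_add_X_pow_eq_one_add_X_pow_iff {R : Type*} [Semiring R] [Nontrivial R]
    {a b c : ℕ} :
    (X ^ a + X ^ b : R[X]) = 1 + X ^ c ↔
      (a = 0 ∧ b = c) ∨ (b = 0 ∧ a = c) ∨ ((2 : R) = 0 ∧ a = b ∧ c = 0) := by
  rw [← pow_zero (X : R[X]), ← toFinsupp_inj]
  simp only [toFinsupp_add, toFinsupp_X_pow]
  rw [AddMonoidAlgebra.single_add_single_inj one_ne_zero one_ne_zero, one_add_one_eq_two]
  grind

theorem Polynomial.X_pow_add_X_pow_eq_one_add_X_pow_of_forall_units {R : Type*} [CommRing R]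
    [IsDomain R] [Fintype Rˣ] {a b c : ℕ} (ha : a < Fintype.card Rˣ) (hb : b < Fintype.card Rˣ)
    (hc : c < Fintype.card Rˣ)
    (h : ∀ α : Rˣ, (α : R) ^ a + (α : R) ^ b = 1 + (α : R) ^ c) :
    (X ^ a + X ^ b : R[X]) = 1 + X ^ c := by
  refine sub_eq_zero.mp <| eq_zero_of_natDegree_lt_card_of_eval_eq_zero _ Units.val_injective
    (fun α ↦ by simp [h]) ?_
  compute_degree
  omega

/-- if `α^a + α^b = 1 + α^c` for all `α ∈ 𝔽_p^×`, with `a, b, c < p − 1`, then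
either `a = 0` and `b = c`, or `b = 0` and `a = c`. -/
theorem stmt5 (p : ℕ) (hp : p.Prime) (a b c : ℕ)
    (ha : a < p - 1) (hb : b < p - 1) (hc : c < p - 1)
    (h : ∀ α : (ZMod p)ˣ, (α : ZMod p) ^ a + (α : ZMod p) ^ b = 1 + (α : ZMod p) ^ c) :
    (a = 0 ∧ b = c) ∨ (b = 0 ∧ a = c) := by
  have := Fact.mk hp
  have hX := X_pow_add_X_pow_eq_one_add_X_pow_of_forall_units
    (by rwa [ZMod.card_units]) (by rwa [ZMod.card_units]) (by rwa [ZMod.card_units]) h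
  obtain hab | hba | ⟨h2, rfl, rfl⟩ := X_pow_add_X_pow_eq_one_add_X_pow_iff.mp hX
  · exact .inl hab
  · exact .inr hba
  · have hp2 : p ≤ 2 := Nat.le_of_dvd two_pos <| (ZMod.natCast_eq_zero_iff 2 p).mp
      (by exact_mod_cast h2)
    exact .inl ⟨by omega, by omega⟩
end

section
/- Let p ≥ 5 be a prime and let k₁, k₂ be even integers with 4 ≤ k₁ < k₂ ≤ p+1. Then there exists an integer i ≥ 0 such that ℓ^i · (1 + ℓ^{k₁−1}) = 1 + ℓ^{k₂−1} in 𝔽_p for every prime ℓ ≠ p, if and only if k₁ + k₂ ≡ 2 (mod p−1). Moreover, in that case any such i satisfies i ≡ p − k₁ (mod p−1). -/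
/-!
By Dirichlet's theorem the residues of the primes `ℓ ≠ p` exhaust `𝔽_pˣ`, so the condition is the
identity `u ^ i + u ^ (i + k₁ - 1) = u ^ 0 + u ^ (k₂ - 1)` on `𝔽_pˣ`. Power sums over `𝔽_pˣ` detect
exponents modulo `p - 1`, so `{i, i + k₁ - 1}` and `{0, k₂ - 1}` agree as multisets of residues.
Since `k₁ - 1` is odd and `0 < k₂ - k₁ < p - 1`, the only possible matching is `i ≡ k₂ - 1` and
`i + k₁ - 1 ≡ 0`.
-/

theorem Nat.dvd_add_mul_sub_one_iff_modEq {d : ℕ} (hd : 0 < d) (n m : ℕ) :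
    d ∣ n + m * (d - 1) ↔ n ≡ m [MOD d] := by
  rw [← ZMod.natCast_eq_zero_iff, ← ZMod.natCast_eq_natCast_iff]
  have hd1 : ((d - 1 : ℕ) : ZMod d) = -1 := by
    rw [Nat.cast_sub hd, ZMod.natCast_self]; ring
  push_cast [hd1]
  rw [mul_neg_one, ← sub_eq_add_neg, sub_eq_zero]

namespace FiniteField

variable {K : Type*} [Field K] [Fintype K]

theorem units_pow_eq_pow_of_modEq (u : Kˣ) {m n : ℕ} (h : m ≡ n [MOD Fintype.card K - 1]) :
    (u : K) ^ m = (u : K) ^ n := by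
  classical
  rw [← Units.val_pow_eq_pow_val, ← Units.val_pow_eq_pow_val]
  exact congrArg _ <| pow_eq_pow_iff_modEq.2 <|
    h.of_dvd (Fintype.card_units (α := K) ▸ orderOf_dvd_card)

/-- Multiplying by `u ^ t` with `m₁ + t ≡ 0` and summing over `Kˣ` counts the exponents
congruent to `m₁`. -/
theorem modEq_or_modEq_of_forall_pow_add_pow_eq {m₁ m₂ n₁ n₂ : ℕ}
    (hm : ¬ m₂ ≡ m₁ [MOD Fintype.card K - 1])
    (h : ∀ u : Kˣ, (u : K) ^ m₁ + (u : K) ^ m₂ = (u : K) ^ n₁ + (u : K) ^ n₂) :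
    n₁ ≡ m₁ [MOD Fintype.card K - 1] ∨ n₂ ≡ m₁ [MOD Fintype.card K - 1] := by
  classical
  have hq : 0 < Fintype.card K - 1 := Nat.sub_pos_of_lt Fintype.one_lt_card
  set t := m₁ * (Fintype.card K - 1 - 1)
  have hsum : ∀ n, ∑ u : Kˣ, (u : K) ^ (n + t) =
      if n ≡ m₁ [MOD Fintype.card K - 1] then -1 else 0 := by
    intro n
    simp only [sum_pow_units, t, Nat.dvd_add_mul_sub_one_iff_modEq hq]
  have key : ∑ u : Kˣ, ((u : K) ^ (m₁ + t) + (u : K) ^ (m₂ + t)) =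
      ∑ u : Kˣ, ((u : K) ^ (n₁ + t) + (u : K) ^ (n₂ + t)) := by
    refine Finset.sum_congr rfl fun u _ => ?_
    simp only [pow_add, ← add_mul, h u]
  simp only [Finset.sum_add_distrib, hsum, if_pos Nat.ModEq.rfl, if_neg hm] at key
  by_contra! hn
  simp [if_neg hn.1, if_neg hn.2] at key

theorem forall_units_pow_mul_one_add_pow_eq_iff {i a b : ℕ}
    (ha : ¬ a ≡ 0 [MOD Fintype.card K - 1]) (hab : ¬ a ≡ b [MOD Fintype.card K - 1]) :
    (∀ u : Kˣ, (u : K) ^ i * (1 + (u : K) ^ a) = 1 + (u : K) ^ b) ↔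
      i ≡ b [MOD Fintype.card K - 1] ∧ i + a ≡ 0 [MOD Fintype.card K - 1] := by
  have expand : ∀ u : Kˣ, (u : K) ^ i * (1 + (u : K) ^ a) = (u : K) ^ i + (u : K) ^ (i + a) := by
    intro u; ring
  simp only [expand]
  constructor
  · intro h
    have h' : ∀ u : Kˣ, (u : K) ^ i + (u : K) ^ (i + a) = (u : K) ^ 0 + (u : K) ^ b := by
      simpa [add_comm] using h
    simp only [← ZMod.natCast_eq_natCast_iff, Nat.cast_add, Nat.cast_zero] at ha hab ⊢
    have hne : ¬ i + a ≡ i [MOD Fintype.card K - 1] := by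
      rw [← ZMod.natCast_eq_natCast_iff, Nat.cast_add]
      exact fun hc => ha (by linear_combination hc)
    have hi := modEq_or_modEq_of_forall_pow_add_pow_eq hne h'
    have hia := modEq_or_modEq_of_forall_pow_add_pow_eq (Ne.symm hne)
      fun u => (add_comm _ _).trans (h' u)
    simp only [← ZMod.natCast_eq_natCast_iff, Nat.cast_add, Nat.cast_zero] at hi hia
    rcases hi with hi | hi <;> rcases hia with hia | hia
    · exact absurd (by linear_combination hi - hia) ha
    · exact absurd (by linear_combination hi - hia) hab
    · exact ⟨hi.symm, hia.symm⟩
    · exact absurd (by linear_combination hi - hia) ha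
  · rintro ⟨hib, hia⟩ u
    rw [units_pow_eq_pow_of_modEq u hib, units_pow_eq_pow_of_modEq u hia, pow_zero, add_comm]

end FiniteField

/-- The nontrivial direction is Dirichlet's theorem on primes in arithmetic progressions. -/
theorem ZMod.forall_prime_ne_iff_forall_units {p : ℕ} [Fact p.Prime] (P : ZMod p → Prop) :
    (∀ ℓ : ℕ, ℓ.Prime → ℓ ≠ p → P ℓ) ↔ ∀ u : (ZMod p)ˣ, P u := by
  constructor
  · intro h u
    obtain ⟨ℓ, hℓp, hℓ, hℓu⟩ := Nat.forall_exists_prime_gt_and_eq_mod u.isUnit p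
    exact hℓu ▸ h ℓ hℓ hℓp.ne'
  · intro h ℓ hℓ hne
    simpa using h (ZMod.unitOfCoprime ℓ ((Nat.coprime_primes hℓ Fact.out).2 hne))

theorem Nat.modEq_sub_one_and_add_modEq_zero_iff {p k₁ k₂ i : ℕ} (h₁ : 1 ≤ k₁) (h₁p : k₁ ≤ p)
    (h₂ : 1 ≤ k₂) :
    i ≡ k₂ - 1 [MOD p - 1] ∧ i + (k₁ - 1) ≡ 0 [MOD p - 1] ↔
      i ≡ p - k₁ [MOD p - 1] ∧ k₁ + k₂ ≡ 2 [MOD p - 1] := by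
  have hp : (p : ZMod (p - 1)) = 1 := by
    rw [← Nat.sub_add_cancel (h₁.trans h₁p), Nat.cast_add, ZMod.natCast_self, zero_add,
      Nat.cast_one]
  simp only [← ZMod.natCast_eq_natCast_iff]
  push_cast [Nat.cast_sub h₁, Nat.cast_sub h₂, Nat.cast_sub h₁p, hp]
  constructor
  · rintro ⟨hb, ha⟩
    exact ⟨by linear_combination ha, by linear_combination ha - hb⟩
  · rintro ⟨hi, hk⟩
    exact ⟨by linear_combination hi - hk, by linear_combination hi⟩

theorem eisenstein_twist_iff {p : ℕ} (hp : p.Prime) {k₁ k₂ : ℕ} (he₁ : Even k₁) (h4 : 4 ≤ k₁)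
    (hlt : k₁ < k₂) (hle : k₂ ≤ p + 1) (i : ℕ) :
    (∀ ℓ : ℕ, ℓ.Prime → ℓ ≠ p →
        (ℓ : ZMod p) ^ i * (1 + (ℓ : ZMod p) ^ (k₁ - 1)) = 1 + (ℓ : ZMod p) ^ (k₂ - 1)) ↔
      i ≡ p - k₁ [MOD p - 1] ∧ k₁ + k₂ ≡ 2 [MOD p - 1] := by
  have := Fact.mk hp
  have hodd : ¬ k₁ - 1 ≡ 0 [MOD p - 1] := fun h => by
    have := (hp.even_sub_one (by omega)).two_dvd.trans (Nat.modEq_zero_iff_dvd.1 h)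
    obtain ⟨r, hr⟩ := he₁
    omega
  have hne : ¬ k₁ - 1 ≡ k₂ - 1 [MOD p - 1] := fun h => by
    have := Nat.le_of_dvd (by omega) ((Nat.modEq_iff_dvd' (by omega)).1 h)
    omega
  have hunits := FiniteField.forall_units_pow_mul_one_add_pow_eq_iff (K := ZMod p) (i := i)
    (by rwa [ZMod.card]) (by rwa [ZMod.card])
  rw [ZMod.card] at hunits
  exact (ZMod.forall_prime_ne_iff_forall_units
    (fun x : ZMod p => x ^ i * (1 + x ^ (k₁ - 1)) = 1 + x ^ (k₂ - 1))).trans <|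
      hunits.trans (Nat.modEq_sub_one_and_add_modEq_zero_iff (by omega) (by omega) (by omega))

theorem stmt6_general (p : ℕ) (hp : p.Prime) (k₁ k₂ : ℕ)
    (he₁ : Even k₁) (h4 : 4 ≤ k₁) (hlt : k₁ < k₂) (hle : k₂ ≤ p + 1) :
    ((∃ i : ℕ, ∀ ℓ : ℕ, ℓ.Prime → ℓ ≠ p →
        (ℓ : ZMod p) ^ i * (1 + (ℓ : ZMod p) ^ (k₁ - 1)) = 1 + (ℓ : ZMod p) ^ (k₂ - 1)) ↔
      k₁ + k₂ ≡ 2 [MOD p - 1]) ∧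
    (k₁ + k₂ ≡ 2 [MOD p - 1] →
      ∀ i : ℕ, (∀ ℓ : ℕ, ℓ.Prime → ℓ ≠ p →
          (ℓ : ZMod p) ^ i * (1 + (ℓ : ZMod p) ^ (k₁ - 1)) = 1 + (ℓ : ZMod p) ^ (k₂ - 1)) →
        i ≡ p - k₁ [MOD p - 1]) := by
  have twist_iff := eisenstein_twist_iff hp he₁ h4 hlt hle
  exact ⟨⟨fun ⟨i, hi⟩ => ((twist_iff i).1 hi).2,
      fun hk => ⟨p - k₁, (twist_iff _).2 ⟨Nat.ModEq.rfl, hk⟩⟩⟩,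
    fun _ i hi => ((twist_iff i).1 hi).1⟩

/-- for even `4 ≤ k₁ < k₂ ≤ p+1`, the Eisenstein eigensystems of weights `k₁` and
`k₂` are equivalent iff `k₁ + k₂ ≡ 2 (mod p−1)`; moreover any twisting exponent `i` satisfies
`i ≡ p − k₁ (mod p−1)`. -/
theorem stmt6 (p : ℕ) (hp : p.Prime) (hp5 : 5 ≤ p) (k₁ k₂ : ℕ)
    (he₁ : Even k₁) (he₂ : Even k₂) (h4 : 4 ≤ k₁) (hlt : k₁ < k₂) (hle : k₂ ≤ p + 1) :
    ((∃ i : ℕ, ∀ ℓ : ℕ, ℓ.Prime → ℓ ≠ p →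
        (ℓ : ZMod p) ^ i * (1 + (ℓ : ZMod p) ^ (k₁ - 1)) = 1 + (ℓ : ZMod p) ^ (k₂ - 1)) ↔
      k₁ + k₂ ≡ 2 [MOD p - 1]) ∧
    (k₁ + k₂ ≡ 2 [MOD p - 1] →
      ∀ i : ℕ, (∀ ℓ : ℕ, ℓ.Prime → ℓ ≠ p →
          (ℓ : ZMod p) ^ i * (1 + (ℓ : ZMod p) ^ (k₁ - 1)) = 1 + (ℓ : ZMod p) ^ (k₂ - 1)) →
        i ≡ p - k₁ [MOD p - 1]) :=
  stmt6_general p hp k₁ k₂ he₁ h4 hlt hle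
end

section
/- Let p ≥ 5 be a prime and let k be an even integer with 4 ≤ k ≤ p+1. Consider the Eisenstein eigensystem Φ_k : ℓ ↦ 1 + ℓ^{k−1} ∈ 𝔽_p, defined on primes ℓ ≠ p. Then the set of functions {Φ_k[i] : i ∈ ℕ} has cardinality p − 1, unless p ≡ 3 (mod 4) and k = (p+1)/2, in which case it has cardinality (p−1)/2. -/
/-!
Dirichlet's theorem makes every unit of `𝔽_p` the residue of a prime `ℓ ≠ p`, so
`Φ_k[i] = Φ_k[j]` exactly when `x ^ i = x ^ j` for every unit `x` with `x ^ (k-1) ≠ -1`.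
Let `g` generate `𝔽_pˣ` and `c = g ^ (k-1)`. If `c ^ 2 ≠ 1`, two consecutive powers `g ^ t`,
`g ^ (t+1)` avoid `x ^ (k-1) = -1`, which forces `g ^ i = g ^ j`, i.e. `i ≡ j [MOD p-1]`.
Since `k - 1` is odd and `k ≤ p + 1`, `c ^ 2 = 1` only when `2 (k-1) = p - 1`; then
`x ^ (k-1) ≠ -1` means that `x` is a square, and the twists are periodic modulo `(p-1)/2`.
-/

def eisensteinSystem (p k : ℕ) (ℓ : {ℓ : ℕ // ℓ.Prime ∧ ℓ ≠ p}) : ZMod p :=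
  1 + (ℓ.1 : ZMod p) ^ (k - 1)

def twist {p : ℕ} (Φ : {ℓ : ℕ // ℓ.Prime ∧ ℓ ≠ p} → ZMod p) (i : ℕ)
    (ℓ : {ℓ : ℕ // ℓ.Prime ∧ ℓ ≠ p}) : ZMod p :=
  (ℓ.1 : ZMod p) ^ i * Φ ℓ

lemma ncard_range_of_eq_iff_modEq {α : Type*} {f : ℕ → α} {m : ℕ} (hm : m ≠ 0)
    (hf : ∀ i j, f i = f j ↔ i ≡ j [MOD m]) : (Set.range f).ncard = m := by
  have hrange : Set.range f = f '' Set.Iio m := by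
    refine (Set.image_subset_range f _).antisymm' ?_
    rintro _ ⟨i, rfl⟩
    exact ⟨i % m, Nat.mod_lt i (Nat.pos_of_ne_zero hm), (hf _ _).2 (Nat.mod_modEq i m)⟩
  rw [hrange, Set.InjOn.ncard_image, Set.ncard_Iio_nat]
  intro i hi j hj hij
  exact Nat.ModEq.eq_of_lt_of_lt ((hf i j).1 hij) hi hj

lemma exists_pow_ne_and_pow_succ_ne {G : Type*} [Group G] {c e : G} (hc : c ^ 2 ≠ 1)
    (he : e ≠ 1) (he2 : e ^ 2 = 1) : ∃ t, c ^ t ≠ e ∧ c ^ (t + 1) ≠ e := by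
  by_cases hce : c ^ 2 = e
  · refine ⟨3, fun h => hc ?_, fun h => he ?_⟩
    · rw [← hce, pow_succ, mul_eq_left] at h
      rw [h, one_pow]
    · rw [← h, show 3 + 1 = 2 * 2 from rfl, pow_mul, hce, he2]
  · exact ⟨1, fun h => hc (by rw [← he2, ← h, pow_one]), hce⟩

lemma pow_eq_pow_of_pow_eq_pow_of_pow_succ_eq_pow {G : Type*} [CommGroup G] {x : G}
    {t i j : ℕ} (ht : (x ^ t) ^ i = (x ^ t) ^ j) (ht1 : (x ^ (t + 1)) ^ i = (x ^ (t + 1)) ^ j) :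
    x ^ i = x ^ j := by
  rw [pow_succ, mul_pow, mul_pow, ht] at ht1
  exact mul_left_cancel ht1

namespace ZMod

variable {p : ℕ} [Fact p.Prime]

lemma exists_prime_ne_natCast_eq (x : (ZMod p)ˣ) :
    ∃ ℓ : ℕ, ℓ.Prime ∧ ℓ ≠ p ∧ (ℓ : ZMod p) = x := by
  obtain ⟨ℓ, -, hℓ, hcast⟩ := Nat.forall_exists_prime_gt_and_eq_mod x.isUnit 0
  refine ⟨ℓ, hℓ, ?_, hcast⟩
  rintro rfl
  exact x.ne_zero (by rw [← hcast, natCast_self])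

lemma natCast_ne_zero_of_prime_ne {ℓ : ℕ} (hℓ : ℓ.Prime) (hne : ℓ ≠ p) : (ℓ : ZMod p) ≠ 0 := by
  rw [Ne, natCast_eq_zero_iff]
  exact fun h => hne ((Nat.prime_dvd_prime_iff_eq Fact.out hℓ).1 h).symm

lemma funext_primes_iff {β : Type*} {f g : ZMod p → β} :
    (fun ℓ : {ℓ : ℕ // ℓ.Prime ∧ ℓ ≠ p} => f ℓ.1) = (fun ℓ => g ℓ.1) ↔
      ∀ x : (ZMod p)ˣ, f x = g x := by
  refine ⟨fun h x => ?_, fun h => funext fun ℓ => ?_⟩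
  · obtain ⟨ℓ, hℓ, hne, hcast⟩ := exists_prime_ne_natCast_eq x
    simpa only [hcast] using congrFun h ⟨ℓ, hℓ, hne⟩
  · have hunit := (isUnit_iff_ne_zero.2 (natCast_ne_zero_of_prime_ne ℓ.2.1 ℓ.2.2))
    simpa only [IsUnit.unit_spec] using h hunit.unit

lemma units_neg_one_ne_one (hp : p ≠ 2) : (-1 : (ZMod p)ˣ) ≠ 1 := by
  have : Fact (2 < p) := ⟨(Fact.out : p.Prime).two_le.lt_of_ne hp.symm⟩
  rw [Ne, Units.ext_iff, Units.val_neg, Units.val_one]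
  exact neg_one_ne_one

lemma exists_orderOf_eq_card_sub_one : ∃ g : (ZMod p)ˣ, orderOf g = p - 1 := by
  rw [← card_units p, ← Nat.card_eq_fintype_card]
  exact IsCyclic.exists_ofOrder_eq_natCard

lemma forall_pow_eq_pow_iff_modEq_card_sub_one {a i j : ℕ} (ha : ¬ p - 1 ∣ 2 * a) :
    (∀ x : (ZMod p)ˣ, x ^ a ≠ -1 → x ^ i = x ^ j) ↔ i ≡ j [MOD p - 1] := by
  refine ⟨fun h => ?_, fun h x _ =>
    pow_eq_pow_iff_modEq.2 (h.of_dvd (orderOf_units_dvd_card_sub_one x))⟩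
  obtain ⟨g, hg⟩ := exists_orderOf_eq_card_sub_one (p := p)
  have hc : (g ^ a) ^ 2 ≠ 1 := by
    rwa [← pow_mul, Ne, ← orderOf_dvd_iff_pow_eq_one, hg, mul_comm]
  have hneg := units_neg_one_ne_one (p := p) (by rintro rfl; exact ha (one_dvd _))
  obtain ⟨t, ht, ht1⟩ := exists_pow_ne_and_pow_succ_ne hc hneg (by simp)
  rw [← hg, ← pow_eq_pow_iff_modEq]
  refine pow_eq_pow_of_pow_eq_pow_of_pow_succ_eq_pow (x := g) (t := t) (h _ ?_) (h _ ?_)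
  · rwa [← pow_mul, mul_comm, pow_mul]
  · rwa [← pow_mul, mul_comm, pow_mul]

lemma forall_pow_eq_pow_iff_modEq_half {a i j : ℕ} (ha : 2 * a = p - 1) :
    (∀ x : (ZMod p)ˣ, x ^ a ≠ -1 → x ^ i = x ^ j) ↔ i ≡ j [MOD a] := by
  refine ⟨fun h => ?_, fun h x hx => ?_⟩
  · obtain ⟨g, hg⟩ := exists_orderOf_eq_card_sub_one (p := p)
    have hsq : (g ^ 2) ^ a = 1 := by rw [← pow_mul, ha, ← hg, pow_orderOf_eq_one]
    have hneg := units_neg_one_ne_one (p := p) (by rintro rfl; omega)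
    have hg2 := h (g ^ 2) (by rw [hsq]; exact hneg.symm)
    rw [← pow_mul, ← pow_mul, pow_eq_pow_iff_modEq, hg, ← ha] at hg2
    exact Nat.ModEq.mul_left_cancel' two_ne_zero hg2
  · have hsq : (x ^ a) ^ 2 = 1 ^ 2 := by
      rw [← pow_mul, mul_comm, ha, one_pow, units_pow_card_sub_one_eq_one]
    have hx1 := (Units.eq_or_eq_neg_of_sq_eq_sq _ _ hsq).resolve_right hx
    exact pow_eq_pow_iff_modEq.2 (h.of_dvd (orderOf_dvd_of_pow_eq_one hx1))

end ZMod

lemma twist_eisensteinSystem_eq_twist_iff {p : ℕ} [Fact p.Prime] {k i j : ℕ} :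
    twist (eisensteinSystem p k) i = twist (eisensteinSystem p k) j ↔
      ∀ x : (ZMod p)ˣ, x ^ (k - 1) ≠ -1 → x ^ i = x ^ j := by
  refine (ZMod.funext_primes_iff (f := fun y => y ^ i * (1 + y ^ (k - 1)))
    (g := fun y => y ^ j * (1 + y ^ (k - 1)))).trans (forall_congr' fun x => ?_)
  simp only [mul_eq_mul_right_iff, add_comm (1 : ZMod p), add_eq_zero_iff_eq_neg, Units.ext_iff,
    Units.val_pow_eq_pow_val, Units.val_neg, Units.val_one, ne_eq, or_iff_not_imp_right]

lemma two_mul_eq_sub_one_of_dvd {p a : ℕ} (hp : 3 < p) (hpo : Odd p) (ha : Odd a) (hap : a ≤ p)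
    (h : p - 1 ∣ 2 * a) : 2 * a = p - 1 := by
  obtain ⟨c, hc⟩ := h
  have hc3 : c < 3 := by
    by_contra! hc3
    have := Nat.mul_le_mul_left (p - 1) hc3
    omega
  obtain ⟨r, rfl⟩ := ha
  obtain ⟨q, rfl⟩ := hpo
  interval_cases c <;> omega

/-- for even `4 ≤ k ≤ p+1`, the Eisenstein eigensystem `Φ_k : ℓ ↦ 1 + ℓ^{k−1}` has
`p − 1` distinct twists, unless `p ≡ 3 (mod 4)` and `k = (p+1)/2`, in which case it has
`(p−1)/2` distinct twists. -/
theorem stmt7 (p : ℕ) (hp : p.Prime) (hp5 : 5 ≤ p) (k : ℕ) (hke : Even k)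
    (h4 : 4 ≤ k) (hle : k ≤ p + 1) :
    (¬(p % 4 = 3 ∧ 2 * k = p + 1) →
      {Ψ : {ℓ : ℕ // ℓ.Prime ∧ ℓ ≠ p} → ZMod p |
        ∃ i : ℕ, Ψ = fun ℓ => (ℓ.1 : ZMod p) ^ i * (1 + (ℓ.1 : ZMod p) ^ (k - 1))}.ncard
        = p - 1) ∧
    ((p % 4 = 3 ∧ 2 * k = p + 1) →
      {Ψ : {ℓ : ℕ // ℓ.Prime ∧ ℓ ≠ p} → ZMod p |
        ∃ i : ℕ, Ψ = fun ℓ => (ℓ.1 : ZMod p) ^ i * (1 + (ℓ.1 : ZMod p) ^ (k - 1))}.ncard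
        = (p - 1) / 2) := by
  have : Fact p.Prime := ⟨hp⟩
  have htwists : {Ψ : {ℓ : ℕ // ℓ.Prime ∧ ℓ ≠ p} → ZMod p |
      ∃ i : ℕ, Ψ = fun ℓ => (ℓ.1 : ZMod p) ^ i * (1 + (ℓ.1 : ZMod p) ^ (k - 1))} =
      Set.range (twist (eisensteinSystem p k)) := by
    ext Ψ
    exact exists_congr fun i => eq_comm
  have hk : Odd (k - 1) := by
    obtain ⟨r, rfl⟩ := hke
    exact ⟨r - 1, by omega⟩
  rw [htwists]
  constructor
  · intro hgeneric
    have hdvd : ¬ p - 1 ∣ 2 * (k - 1) := by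
      intro h
      have hexc :=
        two_mul_eq_sub_one_of_dvd (by omega) (hp.odd_of_ne_two (by omega)) hk (by omega) h
      obtain ⟨r, hr⟩ := hk
      exact hgeneric ⟨by omega, by omega⟩
    exact ncard_range_of_eq_iff_modEq (by omega) fun i j =>
      twist_eisensteinSystem_eq_twist_iff.trans (ZMod.forall_pow_eq_pow_iff_modEq_card_sub_one hdvd)
  · rintro ⟨-, hexc⟩
    rw [show (p - 1) / 2 = k - 1 by omega]
    exact ncard_range_of_eq_iff_modEq (by omega) fun i j =>
      twist_eisensteinSystem_eq_twist_iff.trans (ZMod.forall_pow_eq_pow_iff_modEq_half (by omega))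
end

section
/- Let p ≥ 5 be a prime. The number of distinct mod p eigensystems coming from level 1 Eisenstein series, i.e. the cardinality of the set of functions { ℓ ↦ ℓ^i (1 + ℓ^{k−1}) ∈ 𝔽_p, defined on primes ℓ ≠ p : k even, 4 ≤ k ≤ p+1, i ∈ ℕ }, equals (p−1)²/4. -/
/-!
Since every unit of `𝔽_p` is represented by a prime `ℓ ≠ p` (Dirichlet) and `ℓ ^ (p - 1) = 1`,
the twist `ℓ ↦ ℓ ^ i (1 + ℓ ^ (k - 1)) = ℓ ^ i + ℓ ^ (i + k - 1)` only depends on the exponents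
modulo `p - 1`, and as `k - 1` is odd exactly one of them is even. Writing `p = 2m + 1`, every
eigensystem is therefore `ℓ ↦ ℓ ^ (2a) + ℓ ^ (2b + 1)` with `a, b < m`, and conversely each of
these is a twist `Φ_k[2a]` for a suitable even `4 ≤ k ≤ p + 1`. Two sums of two monomials of degree
`< p - 1` that agree on `𝔽_pˣ` agree as polynomials, so the exponent pair is determined: there are
exactly `m ^ 2 = (p - 1) ^ 2 / 4` eigensystems.
-/

open Finset Polynomial

theorem Polynomial.X_pow_add_X_pow_eq_iff {R : Type*} [Semiring R] (h2 : (2 : R) ≠ 0)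
    {a b c d : ℕ} : (X ^ a + X ^ b : R[X]) = X ^ c + X ^ d ↔ a = c ∧ b = d ∨ a = d ∧ b = c := by
  have h1 : (1 : R) ≠ 0 := fun h => h2 (by rw [← one_add_one_eq_two, h, add_zero])
  rw [← toFinsupp_inj]
  simp only [toFinsupp_add, toFinsupp_X_pow]
  rw [AddMonoidAlgebra.single_add_single_inj h1 h1]
  simp [one_add_one_eq_two, h2]

theorem FiniteField.pow_add_pow_eq_pow_add_pow_iff {K : Type*} [Field K] [Fintype K]
    (h2 : (2 : K) ≠ 0) {a b c d : ℕ} (ha : a < Fintype.card K - 1) (hb : b < Fintype.card K - 1)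
    (hc : c < Fintype.card K - 1) (hd : d < Fintype.card K - 1) :
    (∀ x : Kˣ, (x : K) ^ a + (x : K) ^ b = (x : K) ^ c + (x : K) ^ d) ↔
      a = c ∧ b = d ∨ a = d ∧ b = c := by
  classical
  refine ⟨fun h => (X_pow_add_X_pow_eq_iff h2).mp ?_, ?_⟩
  · refine eq_of_natDegree_lt_card_of_eval_eq _ _ Units.val_injective
      (fun x => by simpa using h x) ?_
    have hab := natDegree_add_le (X ^ a : K[X]) (X ^ b)
    have hcd := natDegree_add_le (X ^ c : K[X]) (X ^ d)
    simp only [natDegree_X_pow] at hab hcd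
    rw [Fintype.card_units]
    omega
  · rintro (⟨rfl, rfl⟩ | ⟨rfl, rfl⟩) x
    · rfl
    · exact add_comm _ _

theorem ZMod.exists_prime_ne_natCast_eq_s8 {p : ℕ} [Fact p.Prime] (x : (ZMod p)ˣ) :
    ∃ ℓ : ℕ, ℓ.Prime ∧ ℓ ≠ p ∧ (ℓ : ZMod p) = x := by
  obtain ⟨ℓ, hℓp, hℓ, hℓx⟩ := Nat.forall_exists_prime_gt_and_eq_mod x.isUnit p
  exact ⟨ℓ, hℓ, hℓp.ne', hℓx⟩

abbrev PrimesAwayFrom (p : ℕ) := {ℓ : ℕ // ℓ.Prime ∧ ℓ ≠ p}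

namespace PrimesAwayFrom

variable {p : ℕ} [Fact p.Prime]

theorem natCast_ne_zero (ℓ : PrimesAwayFrom p) : (ℓ.1 : ZMod p) ≠ 0 := by
  rw [Ne, ZMod.natCast_eq_zero_iff, Nat.prime_dvd_prime_iff_eq Fact.out ℓ.2.1]
  exact ℓ.2.2.symm

theorem natCast_pow_eq_pow_of_modEq (ℓ : PrimesAwayFrom p) {i j : ℕ} (h : i ≡ j [MOD p - 1]) :
    (ℓ.1 : ZMod p) ^ i = (ℓ.1 : ZMod p) ^ j :=
  pow_eq_pow_of_modEq h (ZMod.pow_card_sub_one_eq_one ℓ.natCast_ne_zero)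

end PrimesAwayFrom

def eisensteinSystems (p : ℕ) : Set (PrimesAwayFrom p → ZMod p) :=
  {Ψ | ∃ k i : ℕ, Even k ∧ 4 ≤ k ∧ k ≤ p + 1 ∧
    Ψ = fun ℓ => (ℓ.1 : ZMod p) ^ i * (1 + (ℓ.1 : ZMod p) ^ (k - 1))}

def powEvenAddPowOdd (p : ℕ) (ab : ℕ × ℕ) : PrimesAwayFrom p → ZMod p :=
  fun ℓ => (ℓ.1 : ZMod p) ^ (2 * ab.1) + (ℓ.1 : ZMod p) ^ (2 * ab.2 + 1)

theorem natCast_pow_add_pow_mem_image_powEvenAddPowOdd {p m r s : ℕ} (hr : r < 2 * m)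
    (hs : s < 2 * m) (hrs : r % 2 ≠ s % 2) :
    (fun ℓ : PrimesAwayFrom p => (ℓ.1 : ZMod p) ^ r + (ℓ.1 : ZMod p) ^ s) ∈
      powEvenAddPowOdd p '' (range m ×ˢ range m : Finset (ℕ × ℕ)) := by
  simp only [coe_product, Set.mem_image, Set.mem_prod, mem_coe, mem_range, Prod.exists]
  rcases Nat.mod_two_eq_zero_or_one r with hr2 | hr2
  · refine ⟨r / 2, s / 2, by omega, ?_⟩
    funext ℓ
    rw [powEvenAddPowOdd, show 2 * (r / 2) = r by omega, show 2 * (s / 2) + 1 = s by omega]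
  · refine ⟨s / 2, r / 2, by omega, ?_⟩
    funext ℓ
    rw [powEvenAddPowOdd, add_comm, show 2 * (s / 2) = s by omega,
      show 2 * (r / 2) + 1 = r by omega]

section

variable {p m : ℕ} [Fact p.Prime]

theorem powEvenAddPowOdd_injOn (hm : p = 2 * m + 1) :
    Set.InjOn (powEvenAddPowOdd p) (range m ×ˢ range m : Finset (ℕ × ℕ)) := by
  rintro ⟨a, b⟩ hab ⟨c, d⟩ hcd heq
  simp only [coe_product, Set.mem_prod, mem_coe, mem_range] at hab hcd
  have h2 : (2 : ZMod p) ≠ 0 := Ring.two_ne_zero (by rw [ZMod.ringChar_zmod_n]; omega)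
  have hpow : ∀ x : (ZMod p)ˣ, (x : ZMod p) ^ (2 * a) + (x : ZMod p) ^ (2 * b + 1) =
      (x : ZMod p) ^ (2 * c) + (x : ZMod p) ^ (2 * d + 1) := by
    intro x
    obtain ⟨ℓ, hℓ, hℓp, hℓx⟩ := ZMod.exists_prime_ne_natCast_eq_s8 x
    rw [← hℓx]
    exact congrFun heq ⟨ℓ, hℓ, hℓp⟩
  have hcard : Fintype.card (ZMod p) - 1 = 2 * m := by rw [ZMod.card]; omega
  rw [FiniteField.pow_add_pow_eq_pow_add_pow_iff h2 (by omega) (by omega) (by omega) (by omega)]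
    at hpow
  ext <;> omega

theorem eisensteinSystems_subset_image (hm : p = 2 * m + 1) :
    eisensteinSystems p ⊆ powEvenAddPowOdd p '' (range m ×ˢ range m : Finset (ℕ × ℕ)) := by
  rintro _ ⟨k, i, ⟨t, rfl⟩, hk4, -, rfl⟩
  have hp1 : p - 1 = 2 * m := by omega
  have hdvd : 2 ∣ p - 1 := ⟨m, hp1⟩
  have hpar : i % (p - 1) % 2 ≠ (i + (t + t - 1)) % (p - 1) % 2 := by
    rw [Nat.mod_mod_of_dvd _ hdvd, Nat.mod_mod_of_dvd _ hdvd]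
    omega
  have hlt (n : ℕ) : n % (p - 1) < 2 * m := by
    rw [← hp1]
    exact Nat.mod_lt n (Nat.sub_pos_of_lt (Fact.out : p.Prime).one_lt)
  convert natCast_pow_add_pow_mem_image_powEvenAddPowOdd (hlt _) (hlt _) hpar using 1
  funext ℓ
  rw [mul_add, mul_one, ← pow_add, ℓ.natCast_pow_eq_pow_of_modEq (Nat.mod_modEq i _).symm,
    ℓ.natCast_pow_eq_pow_of_modEq (Nat.mod_modEq (i + (t + t - 1)) _).symm]

theorem image_powEvenAddPowOdd_subset (hm : p = 2 * m + 1) :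
    powEvenAddPowOdd p '' (range m ×ˢ range m : Finset (ℕ × ℕ)) ⊆ eisensteinSystems p := by
  rintro _ ⟨⟨a, b⟩, hab, rfl⟩
  simp only [coe_product, Set.mem_prod, mem_coe, mem_range] at hab
  -- `k - 1 = 2j + 3` runs through the odd numbers in `[3, p]`, a full set of odd residues
  -- modulo `p - 1`; `j` is chosen so that `2a + k - 1 ≡ 2b + 1`.
  set j := (b + m - 1 - a) % m
  have hj : j < m := Nat.mod_lt _ (by omega)
  have hexp : 2 * a + (2 * j + 3) ≡ 2 * b + 1 [MOD p - 1] := by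
    rw [show p - 1 = 2 * m by omega]
    calc 2 * a + (2 * j + 3) = 2 * j + (2 * a + 3) := by ring
      _ ≡ 2 * (b + m - 1 - a) + (2 * a + 3) [MOD 2 * m] :=
        ((Nat.mod_modEq _ m).mul_left' 2).add_right _
      _ = 2 * b + 1 + 2 * m := by omega
      _ ≡ 2 * b + 1 [MOD 2 * m] := Nat.add_modEq_right
  refine ⟨2 * j + 4, 2 * a, ⟨j + 2, by ring⟩, by omega, by omega, ?_⟩
  funext ℓ
  rw [mul_add, mul_one, ← pow_add, show 2 * j + 4 - 1 = 2 * j + 3 by omega,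
    ℓ.natCast_pow_eq_pow_of_modEq hexp]
  rfl

end

/-- the number of distinct mod `p` eigensystems coming from level 1 Eisenstein
series (all twists of `ℓ ↦ 1 + ℓ^{k−1}` for even `4 ≤ k ≤ p+1`) equals `(p−1)²/4`. -/
theorem stmt8 (p : ℕ) (hp : p.Prime) (hp5 : 5 ≤ p) :
    {Ψ : {ℓ : ℕ // ℓ.Prime ∧ ℓ ≠ p} → ZMod p |
      ∃ k i : ℕ, Even k ∧ 4 ≤ k ∧ k ≤ p + 1 ∧
        Ψ = fun ℓ => (ℓ.1 : ZMod p) ^ i * (1 + (ℓ.1 : ZMod p) ^ (k - 1))}.ncard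
      = (p - 1) ^ 2 / 4 := by
  have := Fact.mk hp
  obtain ⟨m, hm⟩ : Odd p := hp.odd_of_ne_two (by omega)
  change (eisensteinSystems p).ncard = _
  rw [(eisensteinSystems_subset_image hm).antisymm (image_powEvenAddPowOdd_subset hm),
    (powEvenAddPowOdd_injOn hm).ncard_image, Set.ncard_coe_finset, card_product,
    card_range, hm, Nat.add_sub_cancel, mul_pow, ← sq]
  norm_num
end
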